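/- arXiv:1211.3439 — 2 statements merged into one kernel-verified Lean document; each statement's English description precedes it below -/
import Mathlib

section
/- Let A be a real N×N doubly stochastic symmetric matrix with ‖A u‖_2 ≤ λ ‖u‖_2 for all u orthogonal to the all-ones vector, where λ > 0. Let V_t ⊆ [N] with |V_t| ≥ p_t N, and let I_{V_t} denote the diagonal projection onto coordinates in V_t. Suppose u is a nonnegative vector satisfying ‖u‖_2 ≤ (2/√(p' N)) ‖u‖_1 for some p' > 0, and λ ≤ p_t p' / 8. Then ‖I_{V_t} A u‖_1 ≥ (3 p_t / 4) ‖u‖_1. -/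
/-!
Write `u = c·𝟙 + u^⊥` with `c = ‖u‖₁ / N` and `u^⊥ ⟂ 𝟙`. Since `A` has row sums one,
`A u = c·𝟙 + A u^⊥`, so on `V_t` the constant part contributes at least `c |V_t| ≥ p_t ‖u‖₁`,
while `‖A u^⊥‖₁ ≤ √N ‖A u^⊥‖₂ ≤ √N λ ‖u^⊥‖₂`. Using the exact value
`N ‖u^⊥‖₂² = N ‖u‖₂² - ‖u‖₁²` (not merely `‖u^⊥‖₂ ≤ ‖u‖₂`) together with `p'(4 - p') ≤ 4`,
the hypotheses bound this error by `p_t ‖u‖₁ / 4` for every `p' > 0`.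
-/

open Finset Matrix

section

variable {ι : Type*} [Fintype ι]

theorem sum_abs_le_sqrt_card_mul_sqrt_sum_sq (x : ι → ℝ) :
    ∑ i, |x i| ≤ √(Fintype.card ι) * √(∑ i, x i ^ 2) := by
  rw [← Real.sqrt_mul (Nat.cast_nonneg _)]
  apply Real.le_sqrt_of_sq_le
  simpa only [sq_abs, card_univ] using sq_sum_le_card_mul_sum_sq (s := univ) (f := fun i => |x i|)

theorem mul_sub_sum_abs_le_sum_abs_add (V : Finset ι) (w : ι → ℝ) (c : ℝ) :
    c * #V - ∑ i, |w i| ≤ ∑ i ∈ V, |w i + c| := by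
  have hterm (i : ι) : c - |w i| ≤ |w i + c| := by
    have := abs_sub_abs_le_abs_sub c (-w i)
    rw [abs_neg, sub_neg_eq_add, add_comm] at this
    linarith [le_abs_self c]
  have hV : ∑ i ∈ V, |w i| ≤ ∑ i, |w i| :=
    sum_le_sum_of_subset_of_nonneg (subset_univ V) fun i _ _ => abs_nonneg (w i)
  calc c * #V - ∑ i, |w i| ≤ c * #V - ∑ i ∈ V, |w i| := sub_le_sub_left hV _
    _ = ∑ i ∈ V, (c - |w i|) := by rw [sum_sub_distrib, sum_const, nsmul_eq_mul, mul_comm]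
    _ ≤ ∑ i ∈ V, |w i + c| := sum_le_sum fun i _ => hterm i

theorem card_mul_sum_div_card (u : ι → ℝ) :
    (Fintype.card ι : ℝ) * ((∑ i, u i) / Fintype.card ι) = ∑ i, u i := by
  rcases isEmpty_or_nonempty ι with hι | hι
  · simp
  · exact mul_div_cancel₀ _ (Nat.cast_ne_zero.mpr Fintype.card_ne_zero)

/-- The component `u^⊥` of `u` orthogonal to the all-ones vector. -/
noncomputable def centered (u : ι → ℝ) : ι → ℝ :=
  fun i => u i - (∑ j, u j) / Fintype.card ι

theorem sum_centered (u : ι → ℝ) : ∑ i, centered u i = 0 := by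
  simp only [centered, sum_sub_distrib, sum_const, card_univ, nsmul_eq_mul,
    card_mul_sum_div_card, sub_self]

theorem card_mul_sum_sq_centered (u : ι → ℝ) :
    Fintype.card ι * ∑ i, centered u i ^ 2 = Fintype.card ι * ∑ i, u i ^ 2 - (∑ i, u i) ^ 2 := by
  have hmean := card_mul_sum_div_card u
  set m := (∑ i, u i) / Fintype.card ι
  have hexp : ∑ i, centered u i ^ 2 = ∑ i, u i ^ 2 - 2 * m * ∑ i, u i + Fintype.card ι * m ^ 2 := by
    simp only [centered, sub_sq, sum_add_distrib, sum_sub_distrib, sum_const, card_univ,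
      nsmul_eq_mul, ← mul_sum, ← sum_mul]
    ring
  rw [hexp]
  clear_value m
  linear_combination (Fintype.card ι * m - ∑ i, u i) * hmean

theorem mulVec_apply_eq_mulVec_centered_apply_add {A : Matrix ι ι ℝ} (hA : A *ᵥ 1 = 1)
    (u : ι → ℝ) (i : ι) :
    (A *ᵥ u) i = (A *ᵥ centered u) i + (∑ j, u j) / Fintype.card ι := by
  have hu : u = centered u + ((∑ j, u j) / Fintype.card ι) • 1 := by
    ext j; simp [centered]
  conv_lhs => rw [hu, mulVec_add, mulVec_smul, hA]
  simp

theorem mul_le_sq_mul_sq_of_sqrt_le_div_sqrt_mul {a b c x : ℝ} (ha : 0 ≤ a)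
    (h : √x ≤ c / √a * b) : a * x ≤ c ^ 2 * b ^ 2 := by
  rw [Real.sqrt_le_iff, mul_pow, div_pow, Real.sq_sqrt ha] at h
  rcases ha.eq_or_lt with rfl | ha
  · rw [zero_mul]; positivity
  · calc a * x ≤ a * (c ^ 2 / a * b ^ 2) := by gcongr; exact h.2
      _ = c ^ 2 * b ^ 2 := by field_simp

theorem sqrt_card_mul_sqrt_sum_sq_centered_le {u : ι → ℝ} {lam pt p' : ℝ} (hp' : 0 < p')
    (hlam : 0 ≤ lam) (hl : lam ≤ pt * p' / 8) (hS : 0 ≤ ∑ i, u i)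
    (hu2 : p' * Fintype.card ι * ∑ i, u i ^ 2 ≤ 4 * (∑ i, u i) ^ 2) :
    √(Fintype.card ι) * (lam * √(∑ i, centered u i ^ 2)) ≤ pt * (∑ i, u i) / 4 := by
  set S := ∑ i, u i
  set X := (Fintype.card ι : ℝ) * ∑ i, centered u i ^ 2 with hX
  have hpX : p' * X ≤ (4 - p') * S ^ 2 := by
    rw [hX, card_mul_sum_sq_centered]
    linarith
  have hpt : 0 ≤ pt := by nlinarith
  have hscaled : p' * (lam ^ 2 * X) ≤ p' * (pt * S / 4) ^ 2 := calc
    p' * (lam ^ 2 * X) = lam ^ 2 * (p' * X) := by ring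
    _ ≤ (pt * p' / 8) ^ 2 * ((4 - p') * S ^ 2) :=
      mul_le_mul (pow_le_pow_left₀ hlam hl 2) hpX (by positivity) (sq_nonneg _)
    _ ≤ p' * (pt * S / 4) ^ 2 := by
      have hgap : p' * (pt * S / 4) ^ 2 - (pt * p' / 8) ^ 2 * ((4 - p') * S ^ 2)
          = (pt * S) ^ 2 * p' * (p' - 2) ^ 2 / 64 := by ring
      linarith [show 0 ≤ (pt * S) ^ 2 * p' * (p' - 2) ^ 2 / 64 by positivity]
  calc √(Fintype.card ι) * (lam * √(∑ i, centered u i ^ 2)) = √(lam ^ 2 * X) := by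
        rw [Real.sqrt_mul (sq_nonneg _), Real.sqrt_sq hlam, hX,
          Real.sqrt_mul (Nat.cast_nonneg _)]
        ring
    _ ≤ pt * S / 4 := Real.sqrt_le_iff.mpr ⟨by positivity, le_of_mul_le_mul_left hscaled hp'⟩

end

theorem stmt_14_general (N : ℕ) (A : Matrix (Fin N) (Fin N) ℝ)
    (hDS : A ∈ doublyStochastic ℝ (Fin N))
    (lam : ℝ) (hlam : 0 < lam)
    (hspec : ∀ u : Fin N → ℝ, ∑ i, u i = 0 →
      Real.sqrt (∑ i, (A.mulVec u i) ^ 2) ≤ lam * Real.sqrt (∑ i, (u i) ^ 2))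
    (Vt : Finset (Fin N)) (pt p' : ℝ) (hp' : 0 < p')
    (hVt : pt * N ≤ (Vt.card : ℝ))
    (u : Fin N → ℝ) (hu : ∀ i, 0 ≤ u i)
    (hu2 : Real.sqrt (∑ i, (u i) ^ 2) ≤ 2 / Real.sqrt (p' * N) * ∑ i, |u i|)
    (hl : lam ≤ pt * p' / 8) :
    ∑ i ∈ Vt, |A.mulVec u i| ≥ 3 * pt / 4 * ∑ i, |u i| := by
  set S := ∑ i, u i
  have hS : 0 ≤ S := sum_nonneg fun i _ => hu i
  rw [sum_congr rfl fun i _ => abs_of_nonneg (hu i)] at hu2 ⊢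
  have hcard : (Fintype.card (Fin N) : ℝ) = N := by simp
  have hu2sq : p' * Fintype.card (Fin N) * ∑ i, u i ^ 2 ≤ 4 * S ^ 2 := by
    have := mul_le_sq_mul_sq_of_sqrt_le_div_sqrt_mul (by positivity) hu2
    rw [hcard]
    linarith
  have hperp : ∑ i, |(A *ᵥ centered u) i| ≤ pt * S / 4 := calc
    _ ≤ √N * √(∑ i, (A *ᵥ centered u) i ^ 2) := hcard ▸ sum_abs_le_sqrt_card_mul_sqrt_sum_sq _
    _ ≤ √N * (lam * √(∑ i, centered u i ^ 2)) := by gcongr; exact hspec _ (sum_centered u)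
    _ ≤ pt * S / 4 := hcard ▸ sqrt_card_mul_sqrt_sum_sq_centered_le hp' hlam.le hl hS hu2sq
  have hpar : pt * S ≤ S / N * #Vt := calc
    pt * S = pt * N * (S / N) := by rw [mul_assoc, ← hcard, card_mul_sum_div_card]
    _ ≤ #Vt * (S / N) := by gcongr
    _ = S / N * #Vt := mul_comm _ _
  calc 3 * pt / 4 * S ≤ S / N * #Vt - ∑ i, |(A *ᵥ centered u) i| := by linarith
    _ ≤ ∑ i ∈ Vt, |(A *ᵥ centered u) i + S / N| := mul_sub_sum_abs_le_sum_abs_add _ _ _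
    _ = ∑ i ∈ Vt, |(A *ᵥ u) i| := sum_congr rfl fun i _ => by
      rw [mulVec_apply_eq_mulVec_centered_apply_add (mulVec_one_of_mem_doublyStochastic hDS) u i,
        hcard]

theorem stmt_14 (N : ℕ) (hN : 0 < N) (A : Matrix (Fin N) (Fin N) ℝ)
    (hDS : A ∈ doublyStochastic ℝ (Fin N)) (hsymm : A.IsSymm)
    (lam : ℝ) (hlam : 0 < lam)
    (hspec : ∀ u : Fin N → ℝ, ∑ i, u i = 0 →
      Real.sqrt (∑ i, (A.mulVec u i) ^ 2) ≤ lam * Real.sqrt (∑ i, (u i) ^ 2))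
    (Vt : Finset (Fin N)) (pt p' : ℝ) (hp' : 0 < p')
    (hVt : pt * N ≤ (Vt.card : ℝ))
    (u : Fin N → ℝ) (hu : ∀ i, 0 ≤ u i)
    (hu2 : Real.sqrt (∑ i, (u i) ^ 2) ≤ 2 / Real.sqrt (p' * N) * ∑ i, |u i|)
    (hl : lam ≤ pt * p' / 8) :
    ∑ i ∈ Vt, |A.mulVec u i| ≥ 3 * pt / 4 * ∑ i, |u i| :=
  stmt_14_general N A hDS lam hlam hspec Vt pt p' hp' hVt u hu hu2 hl
end

section
/- Let p_1,...,p_n ∈ [0,1], let t ≤ n be a positive integer, and let H be a finite family of functions h : [n] → [t] such that for every t-element subset T ⊆ [n], Pr_{h ∈ H}[h is injective on T] ≥ β. Then E_{h ∈ H}[∏_{i=1}^t ∑_{j ∈ h^{-1}(i)} p_j] ≥ β · ∑_{T ⊆ [n], |T| = t} ∏_{j ∈ T} p_j. -/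
/-!
Expanding `∏ i, ∑ j ∈ h⁻¹(i), p j` gives one monomial `∏ j ∈ T, p j` for every transversal `T` of
the fibres of `h`, i.e. for every `T` with `#T = t` on which `h` is injective. Summing over
`h ∈ H` and exchanging the sums, each `t`-set `T` is counted once for every `h ∈ H` injective on
it, which by hypothesis is at least a `β`-fraction of `H`; the monomials are nonnegative.
-/

open Finset

section Transversal

variable {α ι : Type*}

def transversals [Fintype α] [DecidableEq α] [Fintype ι] [DecidableEq ι] (h : α → ι) :
    Finset (Finset α) :=
  (univ.powersetCard (Fintype.card ι)).filter fun T => Set.InjOn h ↑T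

variable {h : α → ι}

theorem mem_transversals [Fintype α] [DecidableEq α] [Fintype ι] [DecidableEq ι] {T : Finset α} :
    T ∈ transversals h ↔ #T = Fintype.card ι ∧ Set.InjOn h ↑T := by
  rw [transversals, mem_filter, mem_powersetCard_univ]

theorem mem_piFinset_fiber_iff [Fintype α] [Fintype ι] [DecidableEq ι] {g : ι → α} :
    g ∈ Fintype.piFinset (fun i => univ.filter (fun j => h j = i)) ↔ ∀ i, h (g i) = i := by
  simp only [Fintype.mem_piFinset, mem_filter, mem_univ, true_and]

theorem image_section_mem_transversals [Fintype α] [DecidableEq α] [Fintype ι] [DecidableEq ι]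
    {g : ι → α} (hg : ∀ i, h (g i) = i) : univ.image g ∈ transversals h := by
  have hinj : Function.Injective g := Function.LeftInverse.injective hg
  refine mem_transversals.2 ⟨by rw [card_image_of_injective _ hinj, card_univ], ?_⟩
  rw [coe_image, coe_univ, Set.image_univ]
  rintro _ ⟨i, rfl⟩ _ ⟨i', rfl⟩ hii'
  rw [hg, hg] at hii'
  rw [hii']

theorem exists_section_image_eq [DecidableEq α] [Fintype ι] [DecidableEq ι] {T : Finset α}
    (hT : #T = Fintype.card ι) (hinj : Set.InjOn h T) :
    ∃ g : ι → α, (∀ i, h (g i) = i) ∧ univ.image g = T := by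
  have himage : T.image h = univ := eq_univ_of_card _ (by rw [card_image_of_injOn hinj, hT])
  have hsurj : ∀ i, ∃ j ∈ T, h j = i := fun i => mem_image.1 (himage ▸ mem_univ i)
  choose g hgT hgh using hsurj
  refine ⟨g, hgh, eq_of_subset_of_card_le ?_ ?_⟩
  · exact image_subset_iff.2 fun i _ => hgT i
  · rw [card_image_of_injective _ (Function.LeftInverse.injective hgh), card_univ, hT]

theorem eq_of_section_of_image_eq [DecidableEq α] [Fintype ι] {g₁ g₂ : ι → α}
    (hg₁ : ∀ i, h (g₁ i) = i) (hg₂ : ∀ i, h (g₂ i) = i)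
    (himage : univ.image g₁ = univ.image g₂) : g₁ = g₂ := by
  funext i
  obtain ⟨i', -, hi'⟩ := mem_image.1 (himage ▸ mem_image_of_mem g₁ (mem_univ i))
  have : i' = i := by rw [← hg₂ i', hi', hg₁]
  rw [← hi', this]

theorem image_sections_eq_transversals [Fintype α] [DecidableEq α] [Fintype ι] [DecidableEq ι] :
    (Fintype.piFinset (fun i => univ.filter (fun j => h j = i))).image (fun g => univ.image g) =
      transversals h := by
  ext T
  simp only [mem_image, mem_piFinset_fiber_iff]
  constructor
  · rintro ⟨g, hg, rfl⟩
    exact image_section_mem_transversals hg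
  · intro hT
    exact exists_section_image_eq (mem_transversals.1 hT).1 (mem_transversals.1 hT).2

theorem prod_sum_fiber_eq_sum_transversals [Fintype α] [DecidableEq α] [Fintype ι]
    [DecidableEq ι] {R : Type*} [CommSemiring R] (p : α → R) :
    ∏ i, ∑ j ∈ univ.filter (fun j => h j = i), p j = ∑ T ∈ transversals h, ∏ j ∈ T, p j := by
  rw [prod_univ_sum, ← image_sections_eq_transversals, sum_image]
  · refine sum_congr rfl fun g hg => ?_
    have hinj := Function.LeftInverse.injective (mem_piFinset_fiber_iff.1 hg)
    rw [prod_image fun a _ b _ hab => hinj hab]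
  · intro g₁ hg₁ g₂ hg₂ himage
    exact eq_of_section_of_image_eq (mem_piFinset_fiber_iff.1 hg₁)
      (mem_piFinset_fiber_iff.1 hg₂) himage

end Transversal

theorem sum_sum_filter_eq_sum_card_filter_mul {γ δ R : Type*} [CommSemiring R]
    (s : Finset γ) (t : Finset δ) (r : γ → δ → Prop) [∀ x y, Decidable (r x y)] (f : δ → R) :
    ∑ x ∈ s, ∑ y ∈ t.filter (r x), f y = ∑ y ∈ t, #(s.filter (r · y)) * f y := by
  rw [sum_comm' (s' := fun y => s.filter (r · y)) (t' := t)]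
  · simp only [sum_const, nsmul_eq_mul]
  · simp only [mem_filter]
    tauto

theorem stmt_18_general (n t : ℕ)
    (p : Fin n → ℝ) (hp0 : ∀ i, 0 ≤ p i)
    (H : Finset (Fin n → Fin t)) (β : ℝ)
    (hinj : ∀ T : Finset (Fin n), T.card = t →
      ((H.filter (fun h => Set.InjOn h ↑T)).card : ℝ) / H.card ≥ β) :
    (∑ h ∈ H, ∏ i : Fin t, ∑ j ∈ Finset.univ.filter (fun j => h j = i), p j) / H.card
      ≥ β * ∑ T ∈ Finset.univ.powersetCard t, ∏ j ∈ T, p j := by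
  have hexpand := fun h : Fin n → Fin t => prod_sum_fiber_eq_sum_transversals (h := h) p
  simp only [transversals, Fintype.card_fin] at hexpand
  simp only [hexpand, sum_sum_filter_eq_sum_card_filter_mul, sum_div, mul_sum]
  refine sum_le_sum fun T hT => ?_
  rw [mul_div_right_comm]
  exact mul_le_mul_of_nonneg_right (hinj T (mem_powersetCard_univ.1 hT))
    (prod_nonneg fun j _ => hp0 j)

theorem stmt_18 (n t : ℕ) (ht : 0 < t) (htn : t ≤ n)
    (p : Fin n → ℝ) (hp0 : ∀ i, 0 ≤ p i) (hp1 : ∀ i, p i ≤ 1)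
    (H : Finset (Fin n → Fin t)) (hH : H.Nonempty) (β : ℝ)
    (hinj : ∀ T : Finset (Fin n), T.card = t →
      ((H.filter (fun h => Set.InjOn h ↑T)).card : ℝ) / H.card ≥ β) :
    (∑ h ∈ H, ∏ i : Fin t, ∑ j ∈ Finset.univ.filter (fun j => h j = i), p j) / H.card
      ≥ β * ∑ T ∈ Finset.univ.powersetCard t, ∏ j ∈ T, p j :=
  stmt_18_general n t p hp0 H β hinj
end
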